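/- Every ℓ-worm worm(p, ℓ, d) ⊆ ℝ² is an interval of the poset (ℝ², ≤) with the product order: (i) it is order-convex, i.e., if u, v ∈ worm(p, ℓ, d) and u ≤ w ≤ v then w ∈ worm(p, ℓ, d); and (ii) it is connected in the sense that any two points u, v ∈ worm(p, ℓ, d) are joined by a finite sequence u = u₀, u₁, …, u_m = v in worm(p, ℓ, d) with consecutive points comparable in the product order. -/
import Mathlib


/-- The `d`-square centered at `p`: points within `ℓ∞`-distance `d` of `p`. -/
def dSquare (p : ℝ × ℝ) (d : ℝ) : Set (ℝ × ℝ) :=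
  {w | max |p.1 - w.1| |p.2 - w.2| ≤ d}

/-- The `ℓ`-worm of width `d` centered at `p`. -/
def worm (p : ℝ × ℝ) (l : ℕ) (d : ℝ) : Set (ℝ × ℝ) :=
  ⋃ j ∈ Finset.Icc (-(l : ℤ) + 1) ((l : ℤ) - 1),
    dSquare (p.1 + (j : ℝ) * d, p.2 - (j : ℝ) * d) d

namespace Stmt7Aux

lemma mem_worm {p : ℝ × ℝ} {l : ℕ} {d : ℝ} {w : ℝ × ℝ} {j : ℤ}
    (h1 : -(l : ℤ) + 1 ≤ j) (h2 : j ≤ (l : ℤ) - 1)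
    (ha : |p.1 + (j : ℝ) * d - w.1| ≤ d) (hb : |p.2 - (j : ℝ) * d - w.2| ≤ d) :
    w ∈ worm p l d := by
  simp only [worm, Set.mem_iUnion, Finset.mem_Icc]
  exact ⟨j, ⟨h1, h2⟩, by simpa [dSquare, max_le_iff] using ⟨ha, hb⟩⟩

lemma worm_mem_iff {p : ℝ × ℝ} {l : ℕ} {d : ℝ} {w : ℝ × ℝ} :
    w ∈ worm p l d ↔ ∃ j : ℤ, (-(l : ℤ) + 1 ≤ j ∧ j ≤ (l : ℤ) - 1) ∧
      |p.1 + (j : ℝ) * d - w.1| ≤ d ∧ |p.2 - (j : ℝ) * d - w.2| ≤ d := by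
  simp only [worm, dSquare, Set.mem_iUnion, Finset.mem_Icc, Set.mem_setOf_eq, max_le_iff]
  tauto

/-- Existence of a comparability-chain in `S` from `u` to `v`. -/
def WChain (S : Set (ℝ × ℝ)) (u v : ℝ × ℝ) : Prop :=
  ∃ (m : ℕ) (c : ℕ → ℝ × ℝ), c 0 = u ∧ c m = v ∧ (∀ i ≤ m, c i ∈ S) ∧
    ∀ i < m, c i ≤ c (i + 1) ∨ c (i + 1) ≤ c i

lemma WChain.single {S : Set (ℝ × ℝ)} {u v : ℝ × ℝ} (hu : u ∈ S) (hv : v ∈ S)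
    (h : u ≤ v ∨ v ≤ u) : WChain S u v := by
  refine ⟨1, fun i => if i = 0 then u else v, by simp, by simp, ?_, ?_⟩
  · intro i _
    dsimp only
    split <;> assumption
  · intro i hi
    interval_cases i
    simpa using h

lemma WChain.trans {S : Set (ℝ × ℝ)} {u v w : ℝ × ℝ}
    (h1 : WChain S u v) (h2 : WChain S v w) : WChain S u w := by
  obtain ⟨m1, c1, h10, h1m, h1mem, h1cmp⟩ := h1
  obtain ⟨m2, c2, h20, h2m, h2mem, h2cmp⟩ := h2
  have hv : c2 0 = c1 m1 := by rw [h20, h1m]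
  refine ⟨m1 + m2, fun i => if i < m1 then c1 i else c2 (i - m1), ?_, ?_, ?_, ?_⟩
  · dsimp only
    split
    · exact h10
    · have hm1 : m1 = 0 := by omega
      subst hm1
      simpa [hv] using h10
  · dsimp only
    rw [if_neg (by omega)]
    simpa using h2m
  · intro i hi
    dsimp only
    split
    · exact h1mem i (by omega)
    · exact h2mem (i - m1) (by omega)
  · intro i hi
    dsimp only
    rcases lt_trichotomy (i + 1) m1 with h | h | h
    · rw [if_pos (by omega), if_pos h]
      exact h1cmp i (by omega)
    · rw [if_pos (by omega), if_neg (by omega)]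
      have : i + 1 - m1 = 0 := by omega
      rw [this, hv, ← h]
      exact h1cmp i (by omega)
    · rw [if_neg (by omega), if_neg (by omega)]
      have e1 : i + 1 - m1 = (i - m1) + 1 := by omega
      rw [e1]
      exact h2cmp (i - m1) (by omega)

lemma WChain.symm {S : Set (ℝ × ℝ)} {u v : ℝ × ℝ} (h : WChain S u v) : WChain S v u := by
  obtain ⟨m, c, h0, hm, hmem, hcmp⟩ := h
  refine ⟨m, fun i => c (m - i), by simpa using hm, by simpa using h0,
    fun i _ => hmem _ (by omega), fun i hi => ?_⟩
  dsimp only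
  have h1 : m - i = (m - (i + 1)) + 1 := by omega
  rw [h1]
  exact (hcmp (m - (i + 1)) (by omega)).symm

/-- Bottom-left corner of square `j`. -/
def BL (p : ℝ × ℝ) (d : ℝ) (j : ℤ) : ℝ × ℝ := (p.1 + (j : ℝ) * d - d, p.2 - (j : ℝ) * d - d)

/-- Bottom-middle point of square `j` (also on the left edge of square `j+1`). -/
def SP (p : ℝ × ℝ) (d : ℝ) (j : ℤ) : ℝ × ℝ := (p.1 + (j : ℝ) * d, p.2 - (j : ℝ) * d - d)

lemma BL_mem {p : ℝ × ℝ} {l : ℕ} {d : ℝ} (hd : 0 < d) {j : ℤ}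
    (h1 : -(l : ℤ) + 1 ≤ j) (h2 : j ≤ (l : ℤ) - 1) : BL p d j ∈ worm p l d := by
  refine mem_worm h1 h2 ?_ ?_ <;> rw [abs_le] <;> constructor <;> simp [BL] <;> linarith

lemma SP_mem {p : ℝ × ℝ} {l : ℕ} {d : ℝ} (hd : 0 < d) {j : ℤ}
    (h1 : -(l : ℤ) + 1 ≤ j) (h2 : j ≤ (l : ℤ) - 1) : SP p d j ∈ worm p l d := by
  refine mem_worm h1 h2 ?_ ?_ <;> rw [abs_le] <;> constructor <;> simp [SP] <;> linarith

lemma chain_step {p : ℝ × ℝ} {l : ℕ} {d : ℝ} (hd : 0 < d) {j : ℤ}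
    (h1 : -(l : ℤ) + 1 ≤ j) (h2 : j + 1 ≤ (l : ℤ) - 1) :
    WChain (worm p l d) (BL p d j) (BL p d (j + 1)) := by
  have hS : SP p d j ∈ worm p l d := SP_mem hd h1 (by omega)
  have hBj : BL p d j ∈ worm p l d := BL_mem hd h1 (by omega)
  have hBj1 : BL p d (j + 1) ∈ worm p l d := BL_mem hd (by omega) h2
  refine (WChain.single hBj hS (Or.inl ⟨?_, ?_⟩)).trans
    (WChain.single hS hBj1 (Or.inr ⟨?_, ?_⟩)) <;> simp [BL, SP] <;> push_cast <;> linarith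

lemma chain_BL {p : ℝ × ℝ} {l : ℕ} {d : ℝ} (hd : 0 < d) (n : ℕ) :
    ∀ j : ℤ, -(l : ℤ) + 1 ≤ j → j + n ≤ (l : ℤ) - 1 →
      WChain (worm p l d) (BL p d j) (BL p d (j + n)) := by
  induction n with
  | zero =>
    intro j h1 h2
    have hB : BL p d j ∈ worm p l d := BL_mem hd h1 (by omega)
    simpa using WChain.single hB hB (Or.inl le_rfl)
  | succ n ih =>
    intro j h1 h2
    have hstep : WChain (worm p l d) (BL p d (j + n)) (BL p d (j + n + 1)) :=
      chain_step hd (by omega) (by omega)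
    have he : j + ((n : ℤ) + 1) = j + n + 1 := by ring
    have : (((n : ℕ) + 1 : ℕ) : ℤ) = (n : ℤ) + 1 := by push_cast; ring
    rw [this, he]
    exact (ih j h1 (by omega)).trans hstep

end Stmt7Aux

open Stmt7Aux in
/-- Every `ℓ`-worm is an interval of `(ℝ², ≤)` with the product order: it is order-convex,
and any two of its points are joined by a finite sequence in the worm whose consecutive
points are comparable. -/
theorem stmt_7 (p : ℝ × ℝ) (l : ℕ) (hl : 1 ≤ l) (d : ℝ) (hd : 0 < d) :
    (∀ u ∈ worm p l d, ∀ v ∈ worm p l d, ∀ w : ℝ × ℝ, u ≤ w → w ≤ v → w ∈ worm p l d) ∧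
    (∀ u ∈ worm p l d, ∀ v ∈ worm p l d, ∃ (m : ℕ) (c : ℕ → ℝ × ℝ),
      c 0 = u ∧ c m = v ∧ (∀ i ≤ m, c i ∈ worm p l d) ∧
      (∀ i < m, c i ≤ c (i + 1) ∨ c (i + 1) ≤ c i)) := by
  constructor
  · intro u hu v hv w huw hwv
    rw [worm_mem_iff] at hu hv
    obtain ⟨j, ⟨hj1, hj2⟩, hja, hjb⟩ := hu
    obtain ⟨k, ⟨hk1, hk2⟩, hka, hkb⟩ := hv
    rw [abs_le] at hja hjb hka hkb
    have h1 : u.1 ≤ w.1 := huw.1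
    have h2 : u.2 ≤ w.2 := huw.2
    have h3 : w.1 ≤ v.1 := hwv.1
    have h4 : w.2 ≤ v.2 := hwv.2
    rcases le_total (p.1 + p.2) (w.1 + w.2) with hc | hc
    · refine mem_worm hk1 hk2 ?_ ?_ <;> rw [abs_le] <;> constructor <;> linarith [hja.1, hja.2]
    · refine mem_worm hj1 hj2 ?_ ?_ <;> rw [abs_le] <;> constructor <;> linarith [hka.1, hka.2]
  · intro u hu v hv
    have huw := hu
    have hvw := hv
    rw [worm_mem_iff] at hu hv
    obtain ⟨j, ⟨hj1, hj2⟩, hja, hjb⟩ := hu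
    obtain ⟨k, ⟨hk1, hk2⟩, hka, hkb⟩ := hv
    rw [abs_le] at hja hjb hka hkb
    have hBju : BL p d j ≤ u := by
      constructor <;> simp [BL] <;> linarith
    have hBkv : BL p d k ≤ v := by
      constructor <;> simp [BL] <;> linarith
    have hBj : BL p d j ∈ worm p l d := BL_mem hd hj1 hj2
    have hBk : BL p d k ∈ worm p l d := BL_mem hd hk1 hk2
    have hmid : WChain (worm p l d) (BL p d j) (BL p d k) := by
      rcases le_total j k with h | h
      · have he : j + ((k - j).toNat : ℤ) = k := by omega
        have := chain_BL (p := p) hd (k - j).toNat j hj1 (by omega)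
        rwa [he] at this
      · have he : k + ((j - k).toNat : ℤ) = j := by omega
        have := chain_BL (p := p) hd (j - k).toNat k hk1 (by omega)
        rw [he] at this
        exact this.symm
    have htot : WChain (worm p l d) u v :=
      ((WChain.single huw hBj (Or.inr hBju)).trans hmid).trans
        (WChain.single hBk hvw (Or.inl hBkv))
    obtain ⟨m, c, h0, hm, hmem, hcmp⟩ := htot
    exact ⟨m, c, h0, hm, hmem, hcmp⟩
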